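/- arXiv:2303.01719 — 2 statements merged into one kernel-verified Lean document; each statement's English description precedes it below -/
import Mathlib

section
/- (Singleton bound) Let C ⊆ V be a (P,π,w)-code of size K with minimum distance d_w(C). Set λ = ⌊(d_w(C) − m_w)/M_w⌋ and μ = max over ideals I of P with |I| = λ of Σ_{i∈I} k_i. Then K ≤ q^{n−μ}. -/
attribute [local instance] Classical.propDecidable

noncomputable section

variable {ι F : Type*}

section Defs
variable [Fintype ι] [PartialOrder ι] [Field F] [Fintype F] {k : ι → ℕ}

/-- block support -/
def suppB (u : ∀ i, Fin (k i) → F) : Finset ι :=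
  Finset.univ.filter fun i => u i ≠ 0

/-- order ideal generated by the block support -/
def idealOf (u : ∀ i, Fin (k i) → F) : Finset ι :=
  Finset.univ.filter fun i => ∃ j ∈ suppB u, i ≤ j

/-- maximal elements of the ideal generated by the support -/
def maxOf (u : ∀ i, Fin (k i) → F) : Finset ι :=
  (idealOf u).filter fun i => ∀ j ∈ idealOf u, i ≤ j → i = j

/-- maximal weight of a block -/
def Wblk (w : F → ℕ) (u : ∀ i, Fin (k i) → F) (i : ι) : ℕ :=
  Finset.univ.sup fun j => w (u i j)

/-- maximal value of the weight -/
def Mw (w : F → ℕ) : ℕ := Finset.univ.sup w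

/-- minimal value of the weight on nonzero elements -/
def mw (w : F → ℕ) : ℕ := sInf (w '' {a | a ≠ 0})

/-- the weighted poset block weight -/
def omegaW (w : F → ℕ) (u : ∀ i, Fin (k i) → F) : ℕ :=
  (∑ i ∈ maxOf u, Wblk w u i) + (idealOf u \ maxOf u).card * Mw w

/-- principal ideal generated by `i` -/
def pIdeal (i : ι) : Finset ι := Finset.univ.filter fun j => j ≤ i

end Defs


/-- `I` is an order ideal of the poset. -/
def IsIdealF [PartialOrder ι] (I : Finset ι) : Prop :=
  ∀ a ∈ I, ∀ b, b ≤ a → b ∈ I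

/-!
Fix an ideal `I` with `|I| = λ` and `∑_{i ∈ I} k_i = μ`. If two distinct codewords agreed off `I`,
the ideal generated by the support of their difference would lie in `I`, so their distance would be
at most `λ M_w ≤ d - m_w`, which is `< d` once `d > 0` (and for `d = 0` the ideal `I` is empty).
Hence restriction to the blocks outside `I` is injective on the code, and there are only
`q ^ (n - μ)` possible restrictions.
-/

theorem suppB_eq_empty_iff [Fintype ι] [Field F] {k : ι → ℕ} {u : ∀ i, Fin (k i) → F} :
    suppB u = ∅ ↔ u = 0 := by
  simp [suppB, Finset.filter_eq_empty_iff, funext_iff]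

theorem idealOf_subset [Fintype ι] [PartialOrder ι] [Field F] {k : ι → ℕ}
    {u : ∀ i, Fin (k i) → F} {I : Finset ι} (hI : IsIdealF I) (hu : suppB u ⊆ I) :
    idealOf u ⊆ I := by
  intro i hi
  obtain ⟨j, hj, hij⟩ := (Finset.mem_filter.mp hi).2
  exact hI j (hu hj) i hij

theorem omegaW_le_card_idealOf_mul [Fintype ι] [PartialOrder ι] [Field F] [Fintype F]
    {k : ι → ℕ} (w : F → ℕ) (u : ∀ i, Fin (k i) → F) :
    omegaW w u ≤ (idealOf u).card * Mw w := by
  have hWblk : ∀ i, Wblk w u i ≤ Mw w := fun i =>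
    Finset.sup_le fun j _ => Finset.le_sup (Finset.mem_univ (u i j))
  have hmax : ∑ i ∈ maxOf u, Wblk w u i ≤ (maxOf u).card * Mw w := by
    simpa using Finset.sum_le_sum fun i (_ : i ∈ maxOf u) => hWblk i
  have hcard := Finset.card_sdiff_add_card_eq_card
    (show maxOf u ⊆ idealOf u from Finset.filter_subset _ _)
  rw [omegaW, ← hcard, add_mul]
  linarith

theorem one_le_mw [Field F] [Fintype F] {w : F → ℕ} (hw0 : ∀ a : F, w a = 0 → a = 0) :
    1 ≤ mw w := by
  obtain ⟨a, ha, hwa⟩ := Nat.sInf_mem (s := w '' {a : F | a ≠ 0}) ⟨w 1, 1, one_ne_zero, rfl⟩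
  rw [mw, ← hwa, Nat.one_le_iff_ne_zero]
  exact fun h => ha (hw0 a h)

theorem card_le_pow_sum_compl [Fintype ι] [Fintype F] {k : ι → ℕ}
    (C : Finset (∀ i, Fin (k i) → F)) (I : Finset ι)
    (hC : ∀ u ∈ C, ∀ v ∈ C, (∀ i ∉ I, u i = v i) → u = v) :
    C.card ≤ Fintype.card F ^ ∑ i ∈ Iᶜ, k i := by
  let restrict : (∀ i, Fin (k i) → F) → (∀ i : ↥Iᶜ, Fin (k i) → F) := fun u i => u i
  have hinj : Set.InjOn restrict C := fun u hu v hv huv =>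
    hC u hu v hv fun i hi => congrFun huv ⟨i, Finset.mem_compl.mpr hi⟩
  calc C.card ≤ Fintype.card (∀ i : ↥Iᶜ, Fin (k i) → F) :=
        Finset.card_le_card_of_injOn restrict (fun _ _ => Finset.mem_univ _) hinj
    _ = Fintype.card F ^ ∑ i ∈ Iᶜ, k i := by
        simp [Fintype.card_pi, Finset.prod_pow_eq_pow_sum, Finset.sum_attach]

theorem eq_of_agree_off_ideal [Fintype ι] [PartialOrder ι] [Field F] [Fintype F] {k : ι → ℕ}
    {w : F → ℕ} (hw0 : ∀ a : F, w a = 0 → a = 0) {C : Finset (∀ i, Fin (k i) → F)} {d : ℕ}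
    (hd : IsLeast {n | ∃ u ∈ C, ∃ v ∈ C, u ≠ v ∧ n = omegaW w (u - v)} d)
    {I : Finset ι} (hI : IsIdealF I) (hIcard : I.card = (d - mw w) / Mw w)
    {u v : ∀ i, Fin (k i) → F} (hu : u ∈ C) (hv : v ∈ C) (huv : ∀ i ∉ I, u i = v i) :
    u = v := by
  have hsupp : suppB (u - v) ⊆ I := fun i hi => by
    by_contra hiI
    exact (Finset.mem_filter.mp hi).2 (sub_eq_zero.mpr (huv i hiI))
  by_contra hne
  -- a nonzero `d` would have to satisfy `d ≤ d - m_w` with `m_w ≥ 1`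
  have hd0 : d = 0 := by
    have hle : d ≤ omegaW w (u - v) := hd.2 ⟨u, hu, v, hv, hne, rfl⟩
    have hge : omegaW w (u - v) ≤ d - mw w :=
      calc omegaW w (u - v) ≤ (idealOf (u - v)).card * Mw w := omegaW_le_card_idealOf_mul w _
        _ ≤ I.card * Mw w := Nat.mul_le_mul_right _ (Finset.card_le_card (idealOf_subset hI hsupp))
        _ ≤ d - mw w := hIcard ▸ Nat.div_mul_le_self _ _
    have := one_le_mw hw0
    omega
  have hIempty : I = ∅ := Finset.card_eq_zero.mp (by simp [hIcard, hd0])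
  exact hne (sub_eq_zero.mp (suppB_eq_empty_iff.mp (Finset.subset_empty.mp (hIempty ▸ hsupp))))

theorem stmt15_general [Fintype ι] [PartialOrder ι] [Field F] [Fintype F] {k : ι → ℕ}
    (w : F → ℕ)
    (hw0 : ∀ a : F, w a = 0 ↔ a = 0)
    (C : Finset (∀ i, Fin (k i) → F)) (d μ : ℕ)
    (hd : IsLeast {n | ∃ u ∈ C, ∃ v ∈ C, u ≠ v ∧ n = omegaW w (u - v)} d)
    (hμ : IsGreatest
      {m | ∃ I : Finset ι, IsIdealF I ∧ I.card = (d - mw w) / Mw w ∧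
        m = ∑ i ∈ I, k i} μ) :
    C.card ≤ Fintype.card F ^ ((∑ i, k i) - μ) := by
  obtain ⟨I, hI, hIcard, rfl⟩ := hμ.1
  have hcompl : ∑ i ∈ Iᶜ, k i = (∑ i, k i) - ∑ i ∈ I, k i := by
    have := Finset.sum_compl_add_sum I k
    omega
  rw [← hcompl]
  exact card_le_pow_sum_compl C I fun u hu v hv =>
    eq_of_agree_off_ideal (fun a => (hw0 a).mp) hd hI hIcard hu hv

/-- Singleton bound for weighted poset block codes. -/
theorem stmt15 [Fintype ι] [PartialOrder ι] [Field F] [Fintype F] {k : ι → ℕ}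
    (hk : ∀ i, 0 < k i)
    (w : F → ℕ)
    (hw0 : ∀ a : F, w a = 0 ↔ a = 0)
    (hwneg : ∀ a : F, w (-a) = w a)
    (hwadd : ∀ a b : F, w (a + b) ≤ w a + w b)
    (C : Finset (∀ i, Fin (k i) → F)) (d μ : ℕ)
    (hd : IsLeast {n | ∃ u ∈ C, ∃ v ∈ C, u ≠ v ∧ n = omegaW w (u - v)} d)
    (hμ : IsGreatest
      {m | ∃ I : Finset ι, IsIdealF I ∧ I.card = (d - mw w) / Mw w ∧
        m = ∑ i ∈ I, k i} μ) :
    C.card ≤ Fintype.card F ^ ((∑ i, k i) - μ) :=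
  stmt15_general w hw0 C d μ hd hμ
end
end

section
/- Let P and Q be posets on [s] with Q finer than P (i ≤_P j implies i ≤_Q j), and let π be a constant labeling π(i) = t for all i. If C is an MDS (P,π,w)-code, then C is an MDS (Q,π,w)-code. -/
attribute [local instance] Classical.propDecidable

noncomputable section

variable {ι F : Type*}

section Defs
variable [Fintype ι] [Field F] [Fintype F] {k : ι → ℕ}

/-- order ideal generated by the block support, w.r.t. the order `le` -/
def idealL (le : ι → ι → Prop) (u : ∀ i, Fin (k i) → F) : Finset ι :=
  Finset.univ.filter fun i => ∃ j ∈ suppB u, le i j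

/-- maximal elements of that ideal -/
def maxL (le : ι → ι → Prop) (u : ∀ i, Fin (k i) → F) : Finset ι :=
  (idealL le u).filter fun i => ∀ j ∈ idealL le u, le i j → i = j

/-- the weighted poset block weight w.r.t. the order `le` -/
def omegaL (le : ι → ι → Prop) (w : F → ℕ) (u : ∀ i, Fin (k i) → F) : ℕ :=
  (∑ i ∈ maxL le u, Wblk w u i) + (idealL le u \ maxL le u).card * Mw w

/-- `C` is an MDS code for the weighted poset block metric determined by `le`:
it attains the Singleton bound. -/
def IsMDSL (le : ι → ι → Prop) (w : F → ℕ) (C : Finset (∀ i, Fin (k i) → F)) :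
    Prop :=
  ∃ d μ : ℕ,
    IsLeast {n | ∃ u ∈ C, ∃ v ∈ C, u ≠ v ∧ n = omegaL le w (u - v)} d ∧
    IsGreatest {m | ∃ I : Finset ι, (∀ a ∈ I, ∀ b, le b a → b ∈ I) ∧
        I.card = (d - mw w) / Mw w ∧ m = ∑ i ∈ I, k i} μ ∧
    C.card = Fintype.card F ^ ((∑ i, k i) - μ)

end Defs

section Aux
variable [Fintype ι] [Field F] [Fintype F] {k : ι → ℕ}

lemma mem_suppB {u : ∀ i, Fin (k i) → F} {i : ι} : i ∈ suppB u ↔ u i ≠ 0 := by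
  simp [suppB]

lemma mem_idealL {le : ι → ι → Prop} {u : ∀ i, Fin (k i) → F} {i : ι} :
    i ∈ idealL le u ↔ ∃ j ∈ suppB u, le i j := by simp [idealL]

lemma mem_maxL {le : ι → ι → Prop} {u : ∀ i, Fin (k i) → F} {i : ι} :
    i ∈ maxL le u ↔ i ∈ idealL le u ∧ ∀ j ∈ idealL le u, le i j → i = j :=
  Finset.mem_filter

lemma maxL_subset_idealL (le : ι → ι → Prop) (u : ∀ i, Fin (k i) → F) :
    maxL le u ⊆ idealL le u := Finset.filter_subset _ _

lemma maxL_subset_suppB (le : ι → ι → Prop) (hrefl : ∀ i, le i i)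
    (u : ∀ i, Fin (k i) → F) : maxL le u ⊆ suppB u := by
  intro i hi
  obtain ⟨hiid, hmax⟩ := mem_maxL.mp hi
  obtain ⟨j, hj, hle⟩ := mem_idealL.mp hiid
  have hjid : j ∈ idealL le u := mem_idealL.mpr ⟨j, hj, hrefl j⟩
  exact (hmax j hjid hle) ▸ hj

lemma Wblk_le_Mw (w : F → ℕ) (u : ∀ i, Fin (k i) → F) (i : ι) :
    Wblk w u i ≤ Mw w :=
  Finset.sup_le fun j _ => Finset.le_sup (Finset.mem_univ (u i j))

lemma Mw_pos (w : F → ℕ) (hw0 : ∀ a : F, w a = 0 ↔ a = 0) : 0 < Mw w := by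
  have h1 : w 1 ≤ Mw w := Finset.le_sup (Finset.mem_univ (1 : F))
  have h2 : w 1 ≠ 0 := fun h => one_ne_zero ((hw0 1).mp h)
  omega

lemma mw_pos (w : F → ℕ) (hw0 : ∀ a : F, w a = 0 ↔ a = 0) : 0 < mw w := by
  have hne : (w '' {a : F | a ≠ 0}).Nonempty := ⟨w 1, 1, one_ne_zero, rfl⟩
  obtain ⟨a, ha, hma⟩ := Nat.sInf_mem hne
  have : w a ≠ 0 := fun h => ha ((hw0 a).mp h)
  unfold mw
  omega

lemma omegaL_le_card_mul (le : ι → ι → Prop) (w : F → ℕ) (u : ∀ i, Fin (k i) → F) :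
    omegaL le w u ≤ (idealL le u).card * Mw w := by
  have h1 : ∑ i ∈ maxL le u, Wblk w u i ≤ (maxL le u).card * Mw w := by
    have := Finset.sum_le_card_nsmul (maxL le u) (fun i => Wblk w u i) (Mw w)
      (fun i _ => Wblk_le_Mw w u i)
    simpa using this
  have h2 : (idealL le u \ maxL le u).card
      = (idealL le u).card - (maxL le u).card :=
    Finset.card_sdiff_of_subset (maxL_subset_idealL le u)
  have h3 : (maxL le u).card ≤ (idealL le u).card :=
    Finset.card_le_card (maxL_subset_idealL le u)
  unfold omegaL
  rw [h2]
  calc ∑ i ∈ maxL le u, Wblk w u i + ((idealL le u).card - (maxL le u).card) * Mw w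
      ≤ (maxL le u).card * Mw w + ((idealL le u).card - (maxL le u).card) * Mw w :=
        Nat.add_le_add_right h1 _
    _ = (idealL le u).card * Mw w := by
        rw [← Nat.add_mul]; congr 1; omega

lemma omegaL_pos (le : ι → ι → Prop) (hle : IsPartialOrder ι le) (w : F → ℕ)
    (hw0 : ∀ a : F, w a = 0 ↔ a = 0)
    {u : ∀ i, Fin (k i) → F} (hu : u ≠ 0) : 0 < omegaL le w u := by
  have hM : 0 < Mw w := Mw_pos w hw0
  obtain ⟨i0, hi0⟩ : ∃ i, u i ≠ 0 := by
    by_contra h; push_neg at h; exact hu (funext fun i => h i)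
  have hsupp : i0 ∈ suppB u := mem_suppB.mpr hi0
  have hid : i0 ∈ idealL le u := mem_idealL.mpr ⟨i0, hsupp, hle.refl i0⟩
  unfold omegaL
  rcases Nat.eq_zero_or_pos ((idealL le u \ maxL le u).card) with h | h
  · have hempty : idealL le u \ maxL le u = ∅ := Finset.card_eq_zero.mp h
    have hsub : idealL le u ⊆ maxL le u := by
      intro i hi
      by_contra hmax
      have hmem : i ∈ idealL le u \ maxL le u := Finset.mem_sdiff.mpr ⟨hi, hmax⟩
      rw [hempty] at hmem
      exact absurd hmem (Finset.notMem_empty i)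
    have him : i0 ∈ maxL le u := hsub hid
    obtain ⟨j, hj⟩ : ∃ j, u i0 j ≠ 0 := by
      by_contra hh; push_neg at hh; exact hi0 (funext hh)
    have h1 : 1 ≤ Wblk w u i0 := by
      have hle' : w (u i0 j) ≤ Wblk w u i0 :=
        Finset.le_sup (f := fun j => w (u i0 j)) (Finset.mem_univ j)
      have hwj : w (u i0 j) ≠ 0 := fun hz => hj ((hw0 _).mp hz)
      omega
    have h2 : Wblk w u i0 ≤ ∑ i ∈ maxL le u, Wblk w u i :=
      Finset.single_le_sum (fun _ _ => Nat.zero_le _) him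
    omega
  · have := Nat.mul_pos h hM
    omega

lemma idealL_mono (leP leQ : ι → ι → Prop) (hf : ∀ i j, leP i j → leQ i j)
    (u : ∀ i, Fin (k i) → F) : idealL leP u ⊆ idealL leQ u := by
  intro i hi
  obtain ⟨j, hj, hle⟩ := mem_idealL.mp hi
  exact mem_idealL.mpr ⟨j, hj, hf _ _ hle⟩

lemma maxL_anti (leP leQ : ι → ι → Prop) (hP : IsPartialOrder ι leP)
    (hQ : IsPartialOrder ι leQ) (hf : ∀ i j, leP i j → leQ i j)
    (u : ∀ i, Fin (k i) → F) : maxL leQ u ⊆ maxL leP u := by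
  intro i hi
  obtain ⟨hiid, hmax⟩ := mem_maxL.mp hi
  have hisupp : i ∈ suppB u := maxL_subset_suppB leQ hQ.refl u hi
  have hiidP : i ∈ idealL leP u := mem_idealL.mpr ⟨i, hisupp, hP.refl i⟩
  refine mem_maxL.mpr ⟨hiidP, fun j hj hle => ?_⟩
  exact hmax j (idealL_mono leP leQ hf u hj) (hf _ _ hle)

lemma omegaL_mono (leP leQ : ι → ι → Prop) (hP : IsPartialOrder ι leP)
    (hQ : IsPartialOrder ι leQ) (hf : ∀ i j, leP i j → leQ i j)
    (w : F → ℕ) (u : ∀ i, Fin (k i) → F) :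
    omegaL leP w u ≤ omegaL leQ w u := by
  have hi : idealL leP u ⊆ idealL leQ u := idealL_mono leP leQ hf u
  have hm : maxL leQ u ⊆ maxL leP u := maxL_anti leP leQ hP hQ hf u
  have hmPi := maxL_subset_idealL leP u
  have hmQi := maxL_subset_idealL leQ u
  have hab : (maxL leQ u).card ≤ (maxL leP u).card := Finset.card_le_card hm
  have hbc : (maxL leP u).card ≤ (idealL leP u).card := Finset.card_le_card hmPi
  have hcd : (idealL leP u).card ≤ (idealL leQ u).card := Finset.card_le_card hi
  have hsplit : ∑ i ∈ maxL leP u \ maxL leQ u, Wblk w u i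
      + ∑ i ∈ maxL leQ u, Wblk w u i = ∑ i ∈ maxL leP u, Wblk w u i :=
    Finset.sum_sdiff hm
  have hb2 : ∑ i ∈ maxL leP u \ maxL leQ u, Wblk w u i
      ≤ ((maxL leP u).card - (maxL leQ u).card) * Mw w := by
    have := Finset.sum_le_card_nsmul (maxL leP u \ maxL leQ u) (fun i => Wblk w u i)
      (Mw w) (fun i _ => Wblk_le_Mw w u i)
    rw [Finset.card_sdiff_of_subset hm] at this
    simpa using this
  unfold omegaL
  rw [Finset.card_sdiff_of_subset hmPi, Finset.card_sdiff_of_subset hmQi]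
  have key : ((maxL leP u).card - (maxL leQ u).card) * Mw w
      + ((idealL leP u).card - (maxL leP u).card) * Mw w
      ≤ ((idealL leQ u).card - (maxL leQ u).card) * Mw w := by
    rw [← Nat.add_mul]
    exact Nat.mul_le_mul_right _ (by omega)
  calc ∑ i ∈ maxL leP u, Wblk w u i
        + ((idealL leP u).card - (maxL leP u).card) * Mw w
      = ∑ i ∈ maxL leQ u, Wblk w u i
        + (∑ i ∈ maxL leP u \ maxL leQ u, Wblk w u i
          + ((idealL leP u).card - (maxL leP u).card) * Mw w) := by
        rw [← hsplit]; ring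
    _ ≤ ∑ i ∈ maxL leQ u, Wblk w u i
        + (((maxL leP u).card - (maxL leQ u).card) * Mw w
          + ((idealL leP u).card - (maxL leP u).card) * Mw w) := by
        exact Nat.add_le_add_left (Nat.add_le_add_right hb2 _) _
    _ ≤ ∑ i ∈ maxL leQ u, Wblk w u i
        + ((idealL leQ u).card - (maxL leQ u).card) * Mw w :=
        Nat.add_le_add_left key _

/-- every cardinality up to `|ι|` is achieved by some order ideal -/
lemma exists_ideal_of_card (le : ι → ι → Prop) (h : IsPartialOrder ι le) :
    ∀ m, m ≤ Fintype.card ι →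
      ∃ I : Finset ι, (∀ a ∈ I, ∀ b, le b a → b ∈ I) ∧ I.card = m := by
  intro m
  induction m with
  | zero => exact fun _ => ⟨∅, by simp, rfl⟩
  | succ m ih =>
    intro hm
    obtain ⟨I, hI, hc⟩ := ih (by omega)
    have hcardsd : (Finset.univ \ I).card = Fintype.card ι - m := by
      rw [Finset.card_sdiff_of_subset (Finset.subset_univ I), Finset.card_univ, hc]
    have hne : (Finset.univ \ I).Nonempty := by
      rw [← Finset.card_pos, hcardsd]; omega
    obtain ⟨x, hx, hmin⟩ := Finset.exists_min_image (Finset.univ \ I)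
      (fun y => ((Finset.univ \ I).filter (fun b => le b y)).card) hne
    have hxI : x ∉ I := (Finset.mem_sdiff.mp hx).2
    refine ⟨insert x I, ?_, ?_⟩
    · intro a ha b hba
      rcases Finset.mem_insert.mp ha with rfl | haI
      · by_cases hbI : b ∈ I
        · exact Finset.mem_insert_of_mem hbI
        by_cases hbx : b = a
        · rw [hbx]; exact Finset.mem_insert_self _ _
        exfalso
        have hbmem : b ∈ Finset.univ \ I := Finset.mem_sdiff.mpr ⟨Finset.mem_univ b, hbI⟩
        have hsub : ((Finset.univ \ I).filter (fun c => le c b))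
            ⊂ ((Finset.univ \ I).filter (fun c => le c a)) := by
          constructor
          · intro c hc
            rw [Finset.mem_filter] at hc ⊢
            exact ⟨hc.1, h.trans _ _ _ hc.2 hba⟩
          · intro hcontra
            have hxmem : a ∈ (Finset.univ \ I).filter (fun c => le c a) :=
              Finset.mem_filter.mpr ⟨hx, h.refl a⟩
            have := Finset.mem_filter.mp (hcontra hxmem)
            exact hbx (h.antisymm _ _ hba this.2)
        have h1 := Finset.card_lt_card hsub
        have h2 := hmin b hbmem
        omega
      · exact Finset.mem_insert_of_mem (hI a haI b hba)
    · rw [Finset.card_insert_of_notMem hxI, hc]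

end Aux

/-- If `Q` is finer than `P` and the labeling is constant, an MDS
`(P,π,w)`-code is also an MDS `(Q,π,w)`-code. -/
theorem stmt16 [Fintype ι] [Field F] [Fintype F] {k : ι → ℕ}
    (leP leQ : ι → ι → Prop)
    (hP : IsPartialOrder ι leP) (hQ : IsPartialOrder ι leQ)
    (hfiner : ∀ i j, leP i j → leQ i j)
    (t : ℕ) (ht : 0 < t) (hconst : ∀ i, k i = t)
    (w : F → ℕ)
    (hw0 : ∀ a : F, w a = 0 ↔ a = 0)
    (hwneg : ∀ a : F, w (-a) = w a)
    (hwadd : ∀ a b : F, w (a + b) ≤ w a + w b)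
    (C : Finset (∀ i, Fin (k i) → F))
    (hC : IsMDSL leP w C) :
    IsMDSL leQ w C := by
  classical
  obtain ⟨d, μ, hdP, hμP, hcard⟩ := hC
  set q := Fintype.card F with hq
  set s := Fintype.card ι with hs
  have hM : 0 < Mw w := Mw_pos w hw0
  have hm0 : 0 < mw w := mw_pos w hw0
  set SQ : Set ℕ := {n | ∃ u ∈ C, ∃ v ∈ C, u ≠ v ∧ n = omegaL leQ w (u - v)} with hSQ
  obtain ⟨u0, hu0, v0, hv0, huv0, hd0⟩ := hdP.1
  have hSQne : SQ.Nonempty := ⟨_, u0, hu0, v0, hv0, huv0, rfl⟩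
  set dQ := sInf SQ with hdQ
  have hdQleast : IsLeast SQ dQ := ⟨Nat.sInf_mem hSQne, fun b hb => Nat.sInf_le hb⟩
  have hdle : d ≤ dQ := by
    obtain ⟨u, hu, v, hv, huv, he⟩ := hdQleast.1
    calc d ≤ omegaL leP w (u - v) := hdP.2 ⟨u, hu, v, hv, huv, rfl⟩
      _ ≤ omegaL leQ w (u - v) := omegaL_mono leP leQ hP hQ hfiner w (u - v)
      _ = dQ := he.symm
  set lP := (d - mw w) / Mw w with hlP
  set lQ := (dQ - mw w) / Mw w with hlQ
  have hlle : lP ≤ lQ :=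
    Nat.div_le_div_right (Nat.sub_le_sub_right hdle _)
  have hdQpos : 0 < dQ := by
    obtain ⟨u, hu, v, hv, huv, he⟩ := hdQleast.1
    rw [he]
    exact omegaL_pos leQ hQ w hw0 (sub_ne_zero.mpr huv)
  have hdQle : dQ ≤ s * Mw w := by
    obtain ⟨u, hu, v, hv, huv, he⟩ := hdQleast.1
    rw [he]
    calc omegaL leQ w (u - v) ≤ (idealL leQ (u - v)).card * Mw w :=
          omegaL_le_card_mul leQ w (u - v)
      _ ≤ s * Mw w := by
          apply Nat.mul_le_mul_right
          rw [hs, ← Finset.card_univ]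
          exact Finset.card_le_card (Finset.subset_univ _)
  have hlQlt : lQ < s := by
    by_contra hcon
    push_neg at hcon
    have h1 : lQ * Mw w ≤ dQ - mw w := Nat.div_mul_le_self _ _
    have h2 : s * Mw w ≤ lQ * Mw w := Nat.mul_le_mul_right _ hcon
    omega
  obtain ⟨IQ, hIQideal, hIQcard⟩ := exists_ideal_of_card leQ hQ lQ (le_of_lt hlQlt)
  have hsumI : ∀ I : Finset ι, ∑ i ∈ I, k i = t * I.card := by
    intro I
    rw [Finset.sum_congr rfl (fun i _ => hconst i), Finset.sum_const, smul_eq_mul,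
      mul_comm]
  obtain ⟨IP, hIPid, hIPcard, hμPval⟩ := hμP.1
  have hμPeq : μ = t * lP := by rw [hμPval, hsumI, hIPcard]
  set μQ := t * lQ with hμQ
  have hgr : IsGreatest {m | ∃ I : Finset ι, (∀ a ∈ I, ∀ b, leQ b a → b ∈ I) ∧
      I.card = (dQ - mw w) / Mw w ∧ m = ∑ i ∈ I, k i} μQ := by
    constructor
    · exact ⟨IQ, hIQideal, hIQcard, by rw [hsumI, hIQcard]⟩
    · rintro m ⟨I, hI, hc, hm⟩
      rw [hm, hsumI, hc]
  have hn : (∑ i, k i) = s * t := by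
    rw [Finset.sum_congr rfl (fun i _ => hconst i), Finset.sum_const, smul_eq_mul,
      Finset.card_univ]
  -- Singleton bound for Q
  set J := (Finset.univ \ IQ : Finset ι) with hJ
  have hJcard : J.card = s - lQ := by
    rw [hJ, Finset.card_sdiff_of_subset (Finset.subset_univ _), Finset.card_univ, hIQcard]
  have hsingleton : C.card ≤ q ^ (t * (s - lQ)) := by
    have hinj : Set.InjOn (fun (u : ∀ i, Fin (k i) → F) => (fun i : J => u i.1)) ↑C := by
      intro u hu v hv he
      by_contra hne
      have hagree : ∀ i, i ∉ IQ → u i = v i := by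
        intro i hiI
        have hiJ : i ∈ J := Finset.mem_sdiff.mpr ⟨Finset.mem_univ i, hiI⟩
        exact congrFun he ⟨i, hiJ⟩
      have hsupp : suppB (u - v) ⊆ IQ := by
        intro i hi
        by_contra hiI
        have h1 := hagree i hiI
        rw [mem_suppB] at hi
        apply hi
        show u i - v i = 0
        rw [h1, sub_self]
      have hideal : idealL leQ (u - v) ⊆ IQ := by
        intro i hi
        obtain ⟨j, hj, hle⟩ := mem_idealL.mp hi
        exact hIQideal j (hsupp hj) i hle
      have hω : omegaL leQ w (u - v) ≤ lQ * Mw w := by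
        calc omegaL leQ w (u - v) ≤ (idealL leQ (u - v)).card * Mw w :=
              omegaL_le_card_mul leQ w (u - v)
          _ ≤ lQ * Mw w := by
              apply Nat.mul_le_mul_right
              rw [← hIQcard]
              exact Finset.card_le_card hideal
      have hd1 : dQ ≤ omegaL leQ w (u - v) := hdQleast.2 ⟨u, hu, v, hv, hne, rfl⟩
      have h2 : lQ * Mw w ≤ dQ - mw w := Nat.div_mul_le_self _ _
      omega
    have hcle : C.card ≤ (Finset.univ : Finset (∀ i : J, Fin (k i.1) → F)).card := by
      apply Finset.card_le_card_of_injOn (fun u => (fun i : J => u i.1))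
        (fun a _ => Finset.mem_univ _) hinj
    calc C.card ≤ (Finset.univ : Finset (∀ i : J, Fin (k i.1) → F)).card := hcle
      _ = Fintype.card (∀ i : J, Fin (k i.1) → F) := Finset.card_univ
      _ = ∏ i : J, Fintype.card (Fin (k i.1) → F) := Fintype.card_pi
      _ = ∏ i : J, q ^ t := by
          apply Finset.prod_congr rfl
          intro i _
          rw [Fintype.card_fun, Fintype.card_fin, hconst]
      _ = (q ^ t) ^ J.card := by rw [Finset.prod_const, Finset.card_univ, Fintype.card_coe]
      _ = q ^ (t * (s - lQ)) := by rw [← pow_mul, hJcard]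
  have hnμQ : (∑ i, k i) - μQ = t * (s - lQ) := by
    have hst : s * t = t * (s - lQ) + t * lQ := by
      rw [← Nat.mul_add]
      have : s - lQ + lQ = s := by omega
      rw [this, mul_comm]
    rw [hn, hμQ, hst, Nat.add_sub_cancel]
  refine ⟨dQ, μQ, hdQleast, hgr, ?_⟩
  have hμle : μ ≤ μQ := by
    rw [hμPeq, hμQ]
    exact Nat.mul_le_mul_left _ hlle
  have hqpos : 1 ≤ q := Fintype.card_pos
  have h1 : q ^ ((∑ i, k i) - μQ) ≤ q ^ ((∑ i, k i) - μ) :=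
    Nat.pow_le_pow_right hqpos (Nat.sub_le_sub_left hμle _)
  have h2 : C.card ≤ q ^ ((∑ i, k i) - μQ) := by rw [hnμQ]; exact hsingleton
  exact le_antisymm h2 (le_trans h1 (le_of_eq hcard.symm))
end
end
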